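/- Let Δ_n be random variables with E[Δ_n] = s_n - s_{n-1} (with s_{-1} = 0), where s_n → μ, and let N be an independent random nonnegative integer with P(N = n) = p_n > 0 for all n. If ∑_n E[Δ_n²]/p_n < ∞, then the estimator W = Δ_N / p_N satisfies E[W] = μ and E[W²] = ∑_n E[Δ_n²]/p_n < ∞. -/

import Mathlib

/-!
On the event `{N = n}` the estimator equals `Δ n / p n`, and independence of `N` from the
family `Δ` factorises `∫_{N = n} g(Δ n / p n) = p n · E[g(Δ n / p n)]`. Countable additivity of
the integral over the partition `{N = n}` then gives `E[W²] = ∑ E[Δ n²] / p n` (finiteness of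
the sum of the pieces yields `W² ∈ L¹`, hence `W ∈ L¹`), and `E[W] = ∑ E[Δ n]` as a convergent
series, whose partial sums `s n` tend to `μ`.
-/

open MeasureTheory ProbabilityTheory Filter Real Topology

lemma Set.iUnion_preimage_singleton {α β : Type*} (f : α → β) : ⋃ b, f ⁻¹' {b} = Set.univ :=
  Set.iUnion_eq_univ_iff.2 fun a => ⟨f a, rfl⟩

namespace ProbabilityTheory

variable {Ω ι : Type*} [MeasurableSpace Ω] {P : Measure Ω}

lemma IndepFun.setIntegral_preimage {α : Type*} [MeasurableSpace α] {N : Ω → α} {Z : Ω → ℝ}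
    (h : IndepFun N Z P) (hN : Measurable N) (hZ : AEStronglyMeasurable Z P) {s : Set α}
    (hs : MeasurableSet s) :
    ∫ ω in N ⁻¹' s, Z ω ∂P = P.real (N ⁻¹' s) * ∫ ω, Z ω ∂P := by
  have hindep : IndepFun (s.indicator (1 : α → ℝ) ∘ N) Z P :=
    h.comp (measurable_one.indicator hs) measurable_id
  have hindicator : (N ⁻¹' s).indicator Z = (s.indicator (1 : α → ℝ) ∘ N) * Z := by
    ext ω
    by_cases hω : N ω ∈ s <;> simp [Set.indicator, hω]
  rw [← integral_indicator (hN hs), hindicator, hindep.integral_mul_eq_mul_integral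
    ((measurable_one.indicator hs).comp hN).aestronglyMeasurable hZ]
  exact congrArg (· * _) (integral_indicator_one (hN hs))

section RandomIndex

variable [MeasurableSpace ι] [MeasurableSingletonClass ι] {N : Ω → ι}
  {Y : ι → Ω → ℝ}

lemma measurable_indexed [Countable ι] (hN : Measurable N) (hY : ∀ i, Measurable (Y i)) :
    Measurable fun ω => Y (N ω) ω :=
  (measurable_from_prod_countable_left (f := fun q : Ω × ι => Y q.2 q.1) hY).comp
    (measurable_id.prodMk hN)

lemma setIntegral_preimage_singleton_indexed (hN : Measurable N)
    (hY : ∀ i, Measurable (Y i)) (hind : IndepFun N (fun ω i => Y i ω) P) (i : ι) :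
    ∫ ω in N ⁻¹' {i}, Y (N ω) ω ∂P = P.real (N ⁻¹' {i}) * ∫ ω, Y i ω ∂P := by
  rw [setIntegral_congr_fun (hN (measurableSet_singleton i)) fun ω (hω : N ω = i) => by rw [hω]]
  exact (hind.comp measurable_id (measurable_pi_apply i)).setIntegral_preimage hN
    (hY i).aestronglyMeasurable (measurableSet_singleton i)

lemma integrable_indexed_of_summable [Countable ι] (hN : Measurable N) (hY : ∀ i, Measurable (Y i))
    (hind : IndepFun N (fun ω i => Y i ω) P) (hYint : ∀ i, Integrable (Y i) P)
    (hsum : Summable fun i => P.real (N ⁻¹' {i}) * ∫ ω, |Y i ω| ∂P) :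
    Integrable (fun ω => Y (N ω) ω) P := by
  rw [← integrableOn_univ, ← Set.iUnion_preimage_singleton N]
  refine integrableOn_iUnion_of_summable_integral_norm (fun i => ?_) ?_
  · exact (hYint i).integrableOn.congr_fun (fun ω (hω : N ω = i) => by rw [hω])
      (hN (measurableSet_singleton i))
  · have hind_abs : IndepFun N (fun ω i => |Y i ω|) P :=
      hind.comp measurable_id (measurable_pi_lambda _ fun i => (measurable_pi_apply i).abs)
    simpa only [Real.norm_eq_abs, setIntegral_preimage_singleton_indexed (Y := fun i ω => |Y i ω|)
      hN (fun i => (hY i).abs) hind_abs] using hsum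

lemma hasSum_integral_indexed [Countable ι] (hN : Measurable N) (hY : ∀ i, Measurable (Y i))
    (hind : IndepFun N (fun ω i => Y i ω) P) (hint : Integrable (fun ω => Y (N ω) ω) P) :
    HasSum (fun i => P.real (N ⁻¹' {i}) * ∫ ω, Y i ω ∂P) (∫ ω, Y (N ω) ω ∂P) := by
  have h := hasSum_integral_iUnion (fun i => hN (measurableSet_singleton i))
    (pairwise_disjoint_fiber N) (by rw [Set.iUnion_preimage_singleton]; exact hint.integrableOn)
  rwa [Set.iUnion_preimage_singleton, setIntegral_univ,
    funext (setIntegral_preimage_singleton_indexed hN hY hind)] at h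

end RandomIndex

end ProbabilityTheory

/-- Single-term randomized MLMC estimator: let `Δ n` be square-integrable with partial sums
of means `s n = ∑_{k=0}^n E[Δ k]` converging to `μ`, and let `N` be an independent random
nonnegative integer with `P(N = n) = p n > 0` for all `n`. If `∑ n, E[Δ n²]/p n < ∞`, then
`W = Δ N / p N` satisfies `E[W] = μ` and `E[W²] = ∑ n, E[Δ n²]/p n < ∞`. -/
theorem stmt_18 {Ω : Type*} [MeasurableSpace Ω] (P : Measure Ω) [IsProbabilityMeasure P]
    (Δ : ℕ → Ω → ℝ) (hΔmeas : ∀ n, Measurable (Δ n))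
    (hΔL2 : ∀ n, MemLp (Δ n) 2 P)
    (μ : ℝ)
    (hs : Tendsto (fun n : ℕ => ∑ k ∈ Finset.range (n + 1), ∫ ω, Δ k ω ∂P)
      atTop (𝓝 μ))
    (N : Ω → ℕ) (hNmeas : Measurable N)
    (p : ℕ → ℝ) (hp : ∀ n, 0 < p n)
    (hpmf : ∀ n : ℕ, P {ω | N ω = n} = ENNReal.ofReal (p n))
    (hNindep : IndepFun N (fun ω => fun n => Δ n ω) P)
    (hsum : Summable (fun n : ℕ => (∫ ω, (Δ n ω) ^ 2 ∂P) / p n)) :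
    Integrable (fun ω => Δ (N ω) ω / p (N ω)) P ∧
    (∫ ω, Δ (N ω) ω / p (N ω) ∂P) = μ ∧
    (∫ ω, (Δ (N ω) ω / p (N ω)) ^ 2 ∂P) = ∑' n : ℕ, (∫ ω, (Δ n ω) ^ 2 ∂P) / p n := by
  have hpN : ∀ n, P.real (N ⁻¹' {n}) = p n := fun n => by
    rw [measureReal_def, ← ENNReal.toReal_ofReal (hp n).le, ← hpmf n]
    rfl
  have hmeas : ∀ n, Measurable fun ω => Δ n ω / p n := fun n => (hΔmeas n).div_const _
  have hmeas2 : ∀ n, Measurable fun ω => (Δ n ω / p n) ^ 2 := fun n => (hmeas n).pow_const 2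
  have hind : IndepFun N (fun ω n => Δ n ω / p n) P := hNindep.comp measurable_id
    (measurable_pi_lambda _ fun n => (measurable_pi_apply n).div_const _)
  have hind2 : IndepFun N (fun ω n => (Δ n ω / p n) ^ 2) P := hind.comp measurable_id
    (measurable_pi_lambda _ fun n => (measurable_pi_apply n).pow_const 2)
  have hterm2 : ∀ n, P.real (N ⁻¹' {n}) * ∫ ω, (Δ n ω / p n) ^ 2 ∂P = (∫ ω, Δ n ω ^ 2 ∂P) / p n :=
    fun n => by
      simp_rw [hpN, div_pow, integral_div]
      field_simp [(hp n).ne']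
  have hint2 : Integrable (fun ω => (Δ (N ω) ω / p (N ω)) ^ 2) P :=
    integrable_indexed_of_summable hNmeas hmeas2 hind2
      (fun n => by simpa only [div_pow] using (hΔL2 n).integrable_sq.div_const (p n ^ 2))
      (hsum.congr fun n => by simp_rw [← hterm2, abs_sq])
  have hint : Integrable (fun ω => Δ (N ω) ω / p (N ω)) P :=
    ((memLp_two_iff_integrable_sq (measurable_indexed hNmeas hmeas).aestronglyMeasurable).2
      hint2).integrable one_le_two
  have hmean : HasSum (fun n => ∫ ω, Δ n ω ∂P) (∫ ω, Δ (N ω) ω / p (N ω) ∂P) := by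
    simpa [hpN, integral_div, mul_div_cancel₀ _ (hp _).ne'] using
      hasSum_integral_indexed hNmeas hmeas hind hint
  refine ⟨hint, tendsto_nhds_unique ((hmean.tendsto_sum_nat).comp (tendsto_add_atTop_nat 1)) hs, ?_⟩
  simpa only [hterm2] using (hasSum_integral_indexed hNmeas hmeas2 hind2 hint2).tsum_eq.symm
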